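/- Let n be a positive integer, σ > 0 a real number, Ω a symmetric positive definite n×n real matrix, V a symmetric invertible n×n real matrix such that σV + Ω⁻¹ is positive definite, v ∈ ℝ^n, v̄ ∈ ℝ, and z ∈ ℝ^n. Let E(z) = ∫_{ℝ^n} exp(−σ·((1/2)·xᵀVx + vᵀx + v̄)) · (det(2πΩ))^(−1/2) · exp(−(1/2)·(x − z)ᵀΩ⁻¹(x − z)) dx. Then E(z) > 0 and −σ⁻¹·ln E(z) = min over x ∈ ℝ^n of [(1/2)·xᵀVx + vᵀx + v̄ + (2σ)⁻¹·(x − z)ᵀΩ⁻¹(x − z)] + (2σ)⁻¹·ln det(I + σΩV). -/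

import Mathlib

/-!
With `A = σ V + Ω⁻¹` and `m = A⁻¹ (Ω⁻¹ z - σ v)`, completing the square gives
`σ · stress x = ½ (x - m)ᵀ A (x - m) + σ · stress m`. Since `A` is positive definite, the stress is
minimal at `m`, and the integrand is `exp (-σ · stress m)` times an unnormalized Gaussian of
precision `A`, whose integral is `(2π)^(n/2) / √(det A)`. Together with the normalization
`det (2πΩ)^(-1/2)` this leaves `1 / √(det Ω · det A) = 1 / √(det (1 + σ Ω V))`.
-/

open MeasureTheory Matrix Real

variable {ι : Type*} [Fintype ι]

theorem Matrix.IsSymm.dotProduct_mulVec_comm {R : Type*} [CommSemiring R] {A : Matrix ι ι R}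
    (hA : A.IsSymm) (x y : ι → R) : x ⬝ᵥ A *ᵥ y = y ⬝ᵥ A *ᵥ x := by
  rw [dotProduct_mulVec, ← mulVec_transpose, hA.eq, dotProduct_comm]

theorem Matrix.IsSymm.half_dotProduct_mulVec_sub_eq {A : Matrix ι ι ℝ} (hA : A.IsSymm)
    {m b : ι → ℝ} (hm : A *ᵥ m = b) (x : ι → ℝ) :
    (1/2) * (x ⬝ᵥ A *ᵥ x) - b ⬝ᵥ x
      = (1/2) * ((x - m) ⬝ᵥ A *ᵥ (x - m)) - (1/2) * (b ⬝ᵥ m) := by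
  have hxm : m ⬝ᵥ A *ᵥ x = b ⬝ᵥ x := by rw [hA.dotProduct_mulVec_comm, hm, dotProduct_comm]
  have hmx : x ⬝ᵥ A *ᵥ m = b ⬝ᵥ x := by rw [hm, dotProduct_comm]
  have hmm : m ⬝ᵥ A *ᵥ m = b ⬝ᵥ m := by rw [hm, dotProduct_comm]
  simp only [mulVec_sub, sub_dotProduct, dotProduct_sub, hxm, hmx, hmm]
  ring

theorem integral_exp_neg_half_dotProduct_self :
    ∫ x : ι → ℝ, exp (-(1/2) * (x ⬝ᵥ x)) = √(2 * π) ^ Fintype.card ι := by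
  have hprod (x : ι → ℝ) : exp (-(1/2) * (x ⬝ᵥ x)) = ∏ i, exp (-(1/2) * x i ^ 2) := by
    simp only [← exp_sum, dotProduct, Finset.mul_sum, sq]
  simp_rw [hprod]
  rw [volume_pi, integral_fintype_prod_eq_pow (fun t : ℝ => exp (-(1/2) * t ^ 2)),
    integral_gaussian, one_div, div_inv_eq_mul, mul_comm]

variable [DecidableEq ι]

theorem det_one_add_smul_mul_eq {Ω : Matrix ι ι ℝ} (hΩ : IsUnit Ω.det) (σ : ℝ)
    (V : Matrix ι ι ℝ) : (1 + σ • (Ω * V)).det = Ω.det * (σ • V + Ω⁻¹).det := by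
  rw [← det_mul, mul_add, Matrix.mul_smul, mul_nonsing_inv Ω hΩ, add_comm]

theorem rpow_neg_half_det_smul {Ω : Matrix ι ι ℝ} (hΩ : 0 ≤ Ω.det) {c : ℝ} (hc : 0 ≤ c) :
    (c • Ω).det ^ (-(1/2) : ℝ) = (√c ^ Fintype.card ι * √Ω.det)⁻¹ := by
  rw [det_smul, rpow_neg (by positivity), ← sqrt_eq_rpow, sqrt_mul (by positivity),
    sqrt_eq_rpow, ← rpow_pow_comm hc, ← sqrt_eq_rpow]

theorem integral_comp_mulVec {E : Type*} [NormedAddCommGroup E] [NormedSpace ℝ E]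
    (g : (ι → ℝ) → E) {S : Matrix ι ι ℝ} (hS : S.det ≠ 0) :
    ∫ x, g (S *ᵥ x) = |S.det|⁻¹ • ∫ y, g y := by
  have hemb : MeasurableEmbedding (toLin' S) :=
    (S.toLinearEquiv' (invertibleOfIsUnitDet S hS.isUnit)).toContinuousLinearEquiv
      |>.toHomeomorph.measurableEmbedding
  calc ∫ x, g (S *ᵥ x) = ∫ y, g y ∂(volume.map (toLin' S)) := (hemb.integral_map g).symm
    _ = |S.det|⁻¹ • ∫ y, g y := by
      rw [Real.map_matrix_volume_pi_eq_smul_volume_pi hS, integral_smul_measure, abs_inv,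
        ENNReal.toReal_ofReal (by positivity)]

theorem integral_exp_neg_half_dotProduct_mulVec {A : Matrix ι ι ℝ} (hA : A.PosDef) :
    ∫ x : ι → ℝ, exp (-(1/2) * (x ⬝ᵥ A *ᵥ x)) = √(2 * π) ^ Fintype.card ι / √A.det := by
  open scoped MatrixOrder in
  obtain ⟨B, rfl⟩ := CStarAlgebra.nonneg_iff_eq_star_mul_self.mp hA.posSemidef.nonneg
  have hquad (x : ι → ℝ) : x ⬝ᵥ (star B * B) *ᵥ x = B *ᵥ x ⬝ᵥ B *ᵥ x := by
    rw [← mulVec_mulVec, dotProduct_mulVec, star_eq_conjTranspose,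
      conjTranspose_eq_transpose_of_trivial, vecMul_transpose]
  have hdet : (star B * B).det = B.det ^ 2 := by
    rw [det_mul, star_eq_conjTranspose, conjTranspose_eq_transpose_of_trivial, det_transpose, sq]
  have hB : B.det ≠ 0 := by
    have hpos := hA.det_pos
    rw [hdet] at hpos
    exact fun h => by simp [h] at hpos
  simp_rw [hquad]
  rw [integral_comp_mulVec (fun y => exp (-(1/2) * (y ⬝ᵥ y))) hB,
    integral_exp_neg_half_dotProduct_self, hdet, sqrt_sq_eq_abs, smul_eq_mul, inv_mul_eq_div]

noncomputable section Stress

variable (σ : ℝ) (Ω V : Matrix ι ι ℝ) (v : ι → ℝ) (vbar : ℝ) (z : ι → ℝ)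

def stress (x : ι → ℝ) : ℝ :=
  (1/2) * (x ⬝ᵥ V *ᵥ x) + v ⬝ᵥ x + vbar + (2*σ)⁻¹ * ((x - z) ⬝ᵥ Ω⁻¹ *ᵥ (x - z))

def stressMinimizer : ι → ℝ := (σ • V + Ω⁻¹)⁻¹ *ᵥ (Ω⁻¹ *ᵥ z - σ • v)

variable {σ Ω V}

theorem mul_stress_eq (hσ : σ ≠ 0) (hΩ : Ω.IsSymm) (x : ι → ℝ) :
    σ * stress σ Ω V v vbar z x
      = (1/2) * (x ⬝ᵥ (σ • V + Ω⁻¹) *ᵥ x) - (Ω⁻¹ *ᵥ z - σ • v) ⬝ᵥ x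
        + (σ * vbar + (1/2) * (z ⬝ᵥ Ω⁻¹ *ᵥ z)) := by
  have hzx : z ⬝ᵥ Ω⁻¹ *ᵥ x = (Ω⁻¹ *ᵥ z) ⬝ᵥ x := by
    rw [hΩ.inv.dotProduct_mulVec_comm, dotProduct_comm]
  have hxz : x ⬝ᵥ Ω⁻¹ *ᵥ z = (Ω⁻¹ *ᵥ z) ⬝ᵥ x := dotProduct_comm _ _
  simp only [stress, add_mulVec, smul_mulVec, dotProduct_add, dotProduct_smul, mulVec_sub,
    sub_dotProduct, dotProduct_sub, smul_dotProduct, smul_eq_mul, hzx, hxz]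
  field_simp
  ring

theorem mul_stress_eq_add_mul_stress_stressMinimizer (hσ : σ ≠ 0) (hV : V.IsSymm)
    (hΩ : Ω.IsSymm) (hA : IsUnit (σ • V + Ω⁻¹).det) (x : ι → ℝ) :
    σ * stress σ Ω V v vbar z x
      = (1/2) * ((x - stressMinimizer σ Ω V v z) ⬝ᵥ (σ • V + Ω⁻¹) *ᵥ
          (x - stressMinimizer σ Ω V v z))
        + σ * stress σ Ω V v vbar z (stressMinimizer σ Ω V v z) := by
  have hA_symm : (σ • V + Ω⁻¹).IsSymm := (hV.smul σ).add hΩ.inv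
  have hm : (σ • V + Ω⁻¹) *ᵥ stressMinimizer σ Ω V v z = Ω⁻¹ *ᵥ z - σ • v := by
    rw [stressMinimizer, mulVec_mulVec, mul_nonsing_inv _ hA, one_mulVec]
  rw [mul_stress_eq v vbar z hσ hΩ, mul_stress_eq v vbar z hσ hΩ,
    hA_symm.half_dotProduct_mulVec_sub_eq hm, hA_symm.half_dotProduct_mulVec_sub_eq hm,
    sub_self, zero_dotProduct]
  ring

theorem iInf_stress (hσ : 0 < σ) (hV : V.IsSymm) (hΩ : Ω.IsSymm) (hA : (σ • V + Ω⁻¹).PosDef) :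
    ⨅ x, stress σ Ω V v vbar z x = stress σ Ω V v vbar z (stressMinimizer σ Ω V v z) := by
  refine ciInf_eq_of_forall_ge_of_forall_gt_exists_lt (fun x => ?_) fun _ hw => ⟨_, hw⟩
  have hsq := hA.posSemidef.dotProduct_mulVec_nonneg (x - stressMinimizer σ Ω V v z)
  rw [star_trivial] at hsq
  refine le_of_mul_le_mul_left ?_ hσ
  rw [mul_stress_eq_add_mul_stress_stressMinimizer v vbar z hσ.ne' hV hΩ hA.det_pos.ne'.isUnit x]
  linarith

theorem det_one_add_smul_mul_pos (hΩ : Ω.PosDef) (hA : (σ • V + Ω⁻¹).PosDef) :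
    0 < (1 + σ • (Ω * V)).det := by
  rw [det_one_add_smul_mul_eq hΩ.det_pos.ne'.isUnit]
  exact mul_pos hΩ.det_pos hA.det_pos

theorem integral_exp_neg_mul_quadratic_gaussian (hσ : σ ≠ 0) (hV : V.IsSymm) (hΩ : Ω.PosDef)
    (hA : (σ • V + Ω⁻¹).PosDef) :
    ∫ x, exp (-σ * ((1/2) * (x ⬝ᵥ V *ᵥ x) + v ⬝ᵥ x + vbar)) * ((2 * π) • Ω).det ^ (-(1/2) : ℝ)
        * exp (-(1/2) * ((x - z) ⬝ᵥ Ω⁻¹ *ᵥ (x - z)))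
      = exp (-σ * stress σ Ω V v vbar z (stressMinimizer σ Ω V v z))
          / √(1 + σ • (Ω * V)).det := by
  set m := stressMinimizer σ Ω V v z with hm
  have hintegrand (x : ι → ℝ) :
      exp (-σ * ((1/2) * (x ⬝ᵥ V *ᵥ x) + v ⬝ᵥ x + vbar)) * ((2 * π) • Ω).det ^ (-(1/2) : ℝ)
        * exp (-(1/2) * ((x - z) ⬝ᵥ Ω⁻¹ *ᵥ (x - z)))
      = ((2 * π) • Ω).det ^ (-(1/2) : ℝ) * exp (-σ * stress σ Ω V v vbar z m)
        * exp (-(1/2) * ((x - m) ⬝ᵥ (σ • V + Ω⁻¹) *ᵥ (x - m))) := by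
    have hexponent : -σ * ((1/2) * (x ⬝ᵥ V *ᵥ x) + v ⬝ᵥ x + vbar)
        + -(1/2) * ((x - z) ⬝ᵥ Ω⁻¹ *ᵥ (x - z)) = -(σ * stress σ Ω V v vbar z x) := by
      simp only [stress]
      field_simp
      ring
    rw [mul_right_comm, ← exp_add, hexponent, mul_stress_eq_add_mul_stress_stressMinimizer v vbar z
      hσ hV (isHermitian_iff_isSymm.mp hΩ.isHermitian) hA.det_pos.ne'.isUnit, mul_assoc,
      ← exp_add, ← hm, mul_comm]
    congr 2
    ring
  simp_rw [hintegrand, integral_const_mul]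
  rw [integral_sub_right_eq_self (fun y => exp (-(1/2) * (y ⬝ᵥ (σ • V + Ω⁻¹) *ᵥ y))) m,
    integral_exp_neg_half_dotProduct_mulVec hA,
    rpow_neg_half_det_smul hΩ.det_pos.le (by positivity),
    det_one_add_smul_mul_eq hΩ.det_pos.ne'.isUnit, sqrt_mul hΩ.det_pos.le]
  have hΩ_sqrt := sqrt_pos.2 hΩ.det_pos
  have hA_sqrt := sqrt_pos.2 hA.det_pos
  have h2π_sqrt : 0 < √(2 * π) := by positivity
  field_simp

end Stress

theorem risk_sensitive_transform_eq_min_stress_general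
    (n : ℕ) (σ : ℝ) (hσ : 0 < σ)
    (Ω : Matrix (Fin n) (Fin n) ℝ) (hΩ_symm : Ω.IsSymm) (hΩ_pd : Ω.PosDef)
    (V : Matrix (Fin n) (Fin n) ℝ) (hV_symm : V.IsSymm)
    (hpd : (σ • V + Ω⁻¹).PosDef)
    (v : Fin n → ℝ) (vbar : ℝ) (z : Fin n → ℝ)
    (E : ℝ)
    (hE : E = ∫ x : Fin n → ℝ,
        Real.exp (-σ * ((1/2) * (x ⬝ᵥ V *ᵥ x) + v ⬝ᵥ x + vbar))
          * (((2 * Real.pi) • Ω).det) ^ (-(1/2) : ℝ)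
          * Real.exp (-(1/2) * ((x - z) ⬝ᵥ Ω⁻¹ *ᵥ (x - z)))) :
    0 < E ∧
    -σ⁻¹ * Real.log E
      = (⨅ x : Fin n → ℝ, ((1/2) * (x ⬝ᵥ V *ᵥ x) + v ⬝ᵥ x + vbar
          + (2*σ)⁻¹ * ((x - z) ⬝ᵥ Ω⁻¹ *ᵥ (x - z))))
        + (2*σ)⁻¹ * Real.log ((1 + σ • (Ω * V)).det) := by
  have hdet := det_one_add_smul_mul_pos hΩ_pd hpd
  rw [integral_exp_neg_mul_quadratic_gaussian v vbar z hσ.ne' hV_symm hΩ_pd hpd] at hE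
  subst hE
  refine ⟨by positivity, ?_⟩
  change _ = (⨅ x, stress σ Ω V v vbar z x) + _
  rw [iInf_stress v vbar z hσ hV_symm hΩ_symm hpd, log_div (exp_ne_zero _) (sqrt_pos.2 hdet).ne',
    log_exp, log_sqrt hdet.le]
  field_simp
  ring

/-- **Whittle's exchange of expectation and minimization** for a quadratic under a Gaussian:
for `σ > 0`, `E(z) = E[exp (-σ q(x))]` with `x ~ N(z, Ω)` is positive and
`-σ⁻¹ ln E(z)` equals the minimum over `x` of the stress
`q(x) + (2σ)⁻¹ (x - z)ᵀ Ω⁻¹ (x - z)` plus `(2σ)⁻¹ ln det (I + σ Ω V)`. -/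
theorem risk_sensitive_transform_eq_min_stress
    (n : ℕ) (hn : 0 < n) (σ : ℝ) (hσ : 0 < σ)
    (Ω : Matrix (Fin n) (Fin n) ℝ) (hΩ_symm : Ω.IsSymm) (hΩ_pd : Ω.PosDef)
    (V : Matrix (Fin n) (Fin n) ℝ) (hV_symm : V.IsSymm) (hV_inv : IsUnit V.det)
    (hpd : (σ • V + Ω⁻¹).PosDef)
    (v : Fin n → ℝ) (vbar : ℝ) (z : Fin n → ℝ)
    (E : ℝ)
    (hE : E = ∫ x : Fin n → ℝ,
        Real.exp (-σ * ((1/2) * (x ⬝ᵥ V *ᵥ x) + v ⬝ᵥ x + vbar))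
          * (((2 * Real.pi) • Ω).det) ^ (-(1/2) : ℝ)
          * Real.exp (-(1/2) * ((x - z) ⬝ᵥ Ω⁻¹ *ᵥ (x - z)))) :
    0 < E ∧
    -σ⁻¹ * Real.log E
      = (⨅ x : Fin n → ℝ, ((1/2) * (x ⬝ᵥ V *ᵥ x) + v ⬝ᵥ x + vbar
          + (2*σ)⁻¹ * ((x - z) ⬝ᵥ Ω⁻¹ *ᵥ (x - z))))
        + (2*σ)⁻¹ * Real.log ((1 + σ • (Ω * V)).det) :=
  risk_sensitive_transform_eq_min_stress_general n σ hσ Ω hΩ_symm hΩ_pd V hV_symm hpd v vbar z E hE
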